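/- arXiv:2009.14230 — 4 statements merged into one kernel-verified Lean document; each statement's English description precedes it below -/
import Mathlib

section
/- If {M_n} is a sequence of non-negative real numbers such that the series of M_n^{-1/n} diverges, and {K_n} is a sequence of non-negative real numbers satisfying K_n ≤ a·M_n + b^n for constants a, b > 0, then the series of K_n^{-1/n} also diverges. -/
/-!
Let `f n = K_{n+1}^{-1/(n+1)}` and suppose `∑ f n` converges, so `f n → 0`. Whenever
`a M_{n+1} ≤ b^{n+1}` we have `K_{n+1} ≤ 2 b^{n+1}`, hence `f n ≥ (2b)⁻¹`; so eventually
`b^{n+1} < a M_{n+1}`, i.e. `K_{n+1} ≤ 2a M_{n+1}`. Since the exponent `-1/(n+1)` lies in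
`[-1, 0]`, this gives `M_{n+1}^{-1/(n+1)} ≤ max (2a) 1 · f n`, and `∑ M_n^{-1/n}` converges
by comparison.
-/

open Filter

namespace Real

lemma rpow_le_max_one {c t : ℝ} (hc : 0 ≤ c) (ht₀ : 0 ≤ t) (ht₁ : t ≤ 1) :
    c ^ t ≤ max c 1 := by
  rcases le_total c 1 with h | h
  · exact (rpow_le_one hc h ht₀).trans (le_max_right _ _)
  · exact (rpow_le_self_of_one_le h ht₁).trans (le_max_left _ _)

lemma rpow_le_max_one_mul_rpow_of_le_mul {c x y e : ℝ} (hc : 0 < c) (hx : 0 < x)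
    (hxy : x ≤ c * y) (he₀ : e ≤ 0) (he₁ : -1 ≤ e) : y ^ e ≤ max c 1 * x ^ e :=
  calc y ^ e ≤ (x / c) ^ e :=
        rpow_le_rpow_of_nonpos (div_pos hx hc) ((div_le_iff₀' hc).2 hxy) he₀
    _ = c ^ (-e) * x ^ e := by rw [div_rpow hx.le hc.le, rpow_neg hc.le, div_eq_inv_mul]
    _ ≤ max c 1 * x ^ e :=
        mul_le_mul_of_nonneg_right (rpow_le_max_one hc.le (by linarith) (by linarith))
          (rpow_nonneg hx.le _)

lemma pow_succ_rpow_neg_one_div {b : ℝ} (hb : 0 ≤ b) (n : ℕ) :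
    (b ^ (n + 1)) ^ (-(1 : ℝ) / (n + 1)) = b⁻¹ := by
  have hcast : (n : ℝ) + 1 = ((n + 1 : ℕ) : ℝ) := by push_cast; ring
  rw [neg_div, one_div, rpow_neg (pow_nonneg hb _), hcast, pow_rpow_inv_natCast hb n.succ_ne_zero]

end Real

lemma neg_one_div_succ_nonpos (n : ℕ) : -(1 : ℝ) / (n + 1) ≤ 0 :=
  div_nonpos_of_nonpos_of_nonneg (by norm_num) (by positivity)

lemma neg_one_le_neg_one_div_succ (n : ℕ) : -1 ≤ -(1 : ℝ) / (n + 1) := by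
  rw [neg_div, neg_le_neg_iff, div_le_one (by positivity)]
  linarith [n.cast_nonneg (α := ℝ)]

theorem stmt_0_general (M K : ℕ → ℝ) (a b : ℝ) (ha : 0 < a) (hb : 0 < b)
    (hK : ∀ n, 0 < K n)
    (hKM : ∀ n, K n ≤ a * M n + b ^ n)
    (hdiv : ¬ Summable (fun n : ℕ => (M (n + 1)) ^ (-(1 : ℝ) / (n + 1)))) :
    ¬ Summable (fun n : ℕ => (K (n + 1)) ^ (-(1 : ℝ) / (n + 1))) := by
  intro hs
  apply hdiv
  have hlarge : ∀ᶠ n in atTop, b ^ (n + 1) < a * M (n + 1) := by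
    filter_upwards [hs.tendsto_atTop_zero.eventually_lt_const (inv_pos.2 (mul_pos two_pos hb))]
      with n hn
    by_contra! hsmall
    have hK₂ : K (n + 1) ≤ 2 * b ^ (n + 1) := by linarith [hKM (n + 1)]
    have := Real.rpow_le_max_one_mul_rpow_of_le_mul two_pos (hK _) hK₂
      (neg_one_div_succ_nonpos n) (neg_one_le_neg_one_div_succ n)
    rw [Real.pow_succ_rpow_neg_one_div hb.le, max_eq_left one_le_two] at this
    rw [mul_inv] at hn
    linarith
  refine (hs.mul_left (max (2 * a) 1)).of_norm_bounded_eventually_nat ?_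
  filter_upwards [hlarge] with n hn
  have hM : 0 < M (n + 1) := pos_of_mul_pos_right ((pow_pos hb _).trans hn) ha.le
  have hK₂ : K (n + 1) ≤ 2 * a * M (n + 1) := by linarith [hKM (n + 1)]
  rw [Real.norm_of_nonneg (Real.rpow_nonneg hM.le _)]
  exact Real.rpow_le_max_one_mul_rpow_of_le_mul (by positivity) (hK _) hK₂
    (neg_one_div_succ_nonpos n) (neg_one_le_neg_one_div_succ n)

/-- If `∑ M_n^{-1/n}` diverges and `K_n ≤ a·M_n + b^n` with `a, b > 0`,
then `∑ K_n^{-1/n}` also diverges. (Series indexed from 1.) -/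
theorem stmt_0 (M K : ℕ → ℝ) (a b : ℝ) (ha : 0 < a) (hb : 0 < b)
    (hM : ∀ n, 0 < M n) (hK : ∀ n, 0 < K n)
    (hKM : ∀ n, K n ≤ a * M n + b ^ n)
    (hdiv : ¬ Summable (fun n : ℕ => (M (n + 1)) ^ (-(1 : ℝ) / (n + 1)))) :
    ¬ Summable (fun n : ℕ => (K (n + 1)) ^ (-(1 : ℝ) / (n + 1))) :=
  stmt_0_general M K a b ha hb hK hKM hdiv
end

section
/- For a bounded measurable set A ⊆ ℝ^n with rectifiable boundary and any ξ ∈ ℝ^n, the Lebesgue measure of the symmetric difference A Δ (A + ξ) is at most |ξ| times the (n−1)-dimensional Hausdorff measure of the boundary ∂A. -/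
/-!
A point of `A Δ (A + ξ)` is the end `x` of a segment `[x - ξ, x]` with exactly one end in `A`;
that segment meets `∂A`, so `A Δ (A + ξ) ⊆ ∂A + [0, ξ]`. After a reflection taking `ξ` to
`|ξ| eⱼ`, a set of diameter `δ` swept along `[0, ξ]` fits in a coordinate box of volume
`δ ^ (n - 1) (δ + |ξ|)`. Covering `∂A` by sets of diameter at most `r` from the definition of
`μH[n - 1]` gives `vol (∂A + [0, ξ]) ≤ μH[n - 1] ∂A · (r + |ξ|)`, and `r → 0` concludes.
-/

open MeasureTheory Set Metric Filter Topology
open scoped Pointwise ENNReal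

theorem IsPreconnected.inter_frontier_nonempty {X : Type*} [TopologicalSpace X] {s t : Set X}
    (hs : IsPreconnected s) (hst : (s ∩ t).Nonempty) (hst' : (s \ t).Nonempty) :
    (s ∩ frontier t).Nonempty := by
  by_contra h
  have hcover : s ⊆ interior t ∪ interior tᶜ := by
    rw [← compl_frontier_eq_union_interior]
    exact fun x hx hxt => h ⟨x, hx, hxt⟩
  rcases hs.subset_or_subset isOpen_interior isOpen_interior
      (disjoint_compl_right.mono interior_subset interior_subset) hcover with hin | hout
  · obtain ⟨x, hxs, hxt⟩ := hst'
    exact hxt (interior_subset (hin hxs))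
  · obtain ⟨x, hxs, hxt⟩ := hst
    exact interior_subset (hout hxs) hxt

theorem symmDiff_image_add_subset_frontier_add_segment {E : Type*} [AddCommGroup E]
    [Module ℝ E] [TopologicalSpace E] [IsTopologicalAddGroup E] [ContinuousSMul ℝ E]
    (A : Set E) (ξ : E) :
    symmDiff A ((· + ξ) '' A) ⊆ frontier A + segment ℝ 0 ξ := by
  intro x hx
  have hseg : IsPreconnected (segment ℝ (x - ξ) x) := (convex_segment _ _).isPreconnected
  have hshift : x ∈ (· + ξ) '' A ↔ x - ξ ∈ A := by
    rw [image_add_right, mem_preimage, sub_eq_add_neg]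
  obtain ⟨c, hc, hcA⟩ : (segment ℝ (x - ξ) x ∩ frontier A).Nonempty := by
    rcases hx with ⟨hxA, hxA'⟩ | ⟨hxA', hxA⟩ <;> rw [hshift] at hxA'
    · exact hseg.inter_frontier_nonempty ⟨x, right_mem_segment _ _ _, hxA⟩
        ⟨x - ξ, left_mem_segment _ _ _, hxA'⟩
    · exact hseg.inter_frontier_nonempty ⟨x - ξ, left_mem_segment _ _ _, hxA'⟩
        ⟨x, right_mem_segment _ _ _, hxA⟩
  obtain ⟨s, t, hs, ht, hst, rfl⟩ := hc
  refine ⟨_, hcA, s • ξ, ⟨t, s, ht, hs, by rw [add_comm, hst], by simp⟩, ?_⟩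
  linear_combination (norm := module) hst • x

namespace EuclideanSpace

variable {ι : Type*} [Fintype ι]

theorem exists_forall_mem_Icc_add_diam {E : Set (EuclideanSpace ℝ ι)}
    (hE : Bornology.IsBounded E) :
    ∃ a : ι → ℝ, ∀ y ∈ E, ∀ i, y i ∈ Icc (a i) (a i + diam E) := by
  rcases E.eq_empty_or_nonempty with rfl | ⟨y₀, hy₀⟩
  · exact ⟨0, by simp⟩
  have hcoord : ∀ y ∈ E, ∀ z ∈ E, ∀ i, y i ≤ z i + diam E := fun y hy z hz i =>
    calc y i = z i + (y - z) i := by simp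
      _ ≤ z i + ‖y - z‖ := by gcongr; exact (Real.le_norm_self _).trans (PiLp.norm_apply_le _ _)
      _ ≤ z i + diam E := by gcongr; exact dist_eq_norm y z ▸ dist_le_diam_of_mem hE hy hz
  have : Nonempty E := ⟨⟨y₀, hy₀⟩⟩
  have hbdd : ∀ i, BddBelow (range fun y : E => (y : EuclideanSpace ℝ ι) i) := fun i =>
    ⟨y₀ i - diam E, by rintro _ ⟨y, rfl⟩; linarith [hcoord y₀ hy₀ y y.2 i]⟩
  refine ⟨fun i => ⨅ y : E, (y : EuclideanSpace ℝ ι) i, fun y hy i =>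
    ⟨ciInf_le (hbdd i) ⟨y, hy⟩, ?_⟩⟩
  have : y i - diam E ≤ ⨅ z : E, (z : EuclideanSpace ℝ ι) i :=
    le_ciInf fun z => by linarith [hcoord y hy z z.2 i]
  linarith

theorem volume_setOf_forall_mem_Icc (a b : ι → ℝ) :
    volume {x : EuclideanSpace ℝ ι | ∀ i, x i ∈ Icc (a i) (b i)} =
      ∏ i, ENNReal.ofReal (b i - a i) := by
  have hbox : {x : EuclideanSpace ℝ ι | ∀ i, x i ∈ Icc (a i) (b i)} =
      WithLp.ofLp ⁻¹' univ.pi fun i => Icc (a i) (b i) := by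
    ext x; simp only [mem_preimage, mem_univ_pi]; exact Iff.rfl
  rw [hbox, (PiLp.volume_preserving_ofLp ι).measure_preimage
    (MeasurableSet.univ_pi fun _ => measurableSet_Icc).nullMeasurableSet, volume_pi_pi]
  simp only [Real.volume_Icc]

theorem volume_add_segment_single_le [DecidableEq ι]
    {E : Set (EuclideanSpace ℝ ι)} (hE : Bornology.IsBounded E) (j : ι) {L : ℝ} (hL : 0 ≤ L) :
    volume (E + segment ℝ 0 (single j L)) ≤
      ENNReal.ofReal (diam E) ^ (Fintype.card ι - 1) * ENNReal.ofReal (diam E + L) := by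
  obtain ⟨a, ha⟩ := exists_forall_mem_Icc_add_diam hE
  have hsub : E + segment ℝ 0 (single j L) ⊆
      {x | ∀ i, x i ∈ Icc (a i) (a i + (diam E + single j L i))} := by
    rintro _ ⟨y, hy, _, ⟨s, t, hs, ht, hst, rfl⟩, rfl⟩ i
    have hsingle : 0 ≤ single j L i := by
      rw [PiLp.single_apply]; split_ifs <;> simp [hL]
    have hyi := ha y hy i
    simp only [smul_zero, zero_add, PiLp.add_apply, PiLp.smul_apply, smul_eq_mul, mem_Icc]
      at hyi ⊢
    constructor <;> nlinarith
  calc volume (E + segment ℝ 0 (single j L))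
      ≤ ∏ i, ENNReal.ofReal (diam E + single j L i) := by
        refine (measure_mono hsub).trans_eq ?_
        simp only [volume_setOf_forall_mem_Icc, add_sub_cancel_left]
    _ = _ := by
        have hoff : ∀ i ∈ ({j}ᶜ : Finset ι),
            ENNReal.ofReal (diam E + single j L i) = ENNReal.ofReal (diam E) := fun i hi => by
          rw [PiLp.single_apply, if_neg (by simpa using hi), add_zero]
        rw [Fintype.prod_eq_mul_prod_compl j, Finset.prod_congr rfl hoff, Finset.prod_const,
          Finset.card_compl, Finset.card_singleton, mul_comm, PiLp.single_apply, if_pos rfl]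

theorem volume_add_segment_le [Nonempty ι] {E : Set (EuclideanSpace ℝ ι)}
    (hE : Bornology.IsBounded E) (ξ : EuclideanSpace ℝ ι) :
    volume (E + segment ℝ 0 ξ) ≤ ediam E ^ ((Fintype.card ι : ℝ) - 1) * (ediam E + ‖ξ‖ₑ) := by
  classical
  let j : ι := Classical.arbitrary ι
  let ρ := Submodule.reflection (ℝ ∙ (ξ - single j ‖ξ‖))ᗮ
  have hρξ : ρ ξ = single j ‖ξ‖ := Submodule.reflection_sub (by simp)
  have hρS : ρ '' segment ℝ 0 ξ = segment ℝ 0 (single j ‖ξ‖) := by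
    simpa [hρξ] using image_segment ℝ ρ.toLinearEquiv.toLinearMap.toAffineMap 0 ξ
  have hρE : Bornology.IsBounded (ρ '' E) := ρ.lipschitz.isBounded_image hE
  have hdiam : ENNReal.ofReal (diam (ρ '' E)) = ediam E := by
    rw [ρ.isometry.diam_image, diam, ENNReal.ofReal_toReal hE.ediam_ne_top]
  have hexp : ((Fintype.card ι - 1 : ℕ) : ℝ) = (Fintype.card ι : ℝ) - 1 := by
    rw [Nat.cast_sub Fintype.card_pos, Nat.cast_one]
  calc volume (E + segment ℝ 0 ξ)
      = volume (ρ '' (E + segment ℝ 0 ξ)) := by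
        rw [← ρ.measurePreserving.measure_preimage_equiv (f := ρ.toMeasurableEquiv) (ρ '' _),
          LinearIsometryEquiv.coe_toMeasurableEquiv, ρ.injective.preimage_image]
    _ = volume (ρ '' E + segment ℝ 0 (single j ‖ξ‖)) := by
        rw [image_add, hρS]
    _ ≤ ENNReal.ofReal (diam (ρ '' E)) ^ (Fintype.card ι - 1) *
          ENNReal.ofReal (diam (ρ '' E) + ‖ξ‖) :=
        volume_add_segment_single_le hρE j (norm_nonneg ξ)
    _ = _ := by
        rw [ENNReal.ofReal_add diam_nonneg (norm_nonneg ξ), hdiam, ofReal_norm, ← hexp,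
          ENNReal.rpow_natCast]

theorem volume_add_segment_le_hausdorffMeasure_mul [Nonempty ι]
    (F : Set (EuclideanSpace ℝ ι)) (ξ : EuclideanSpace ℝ ι) {r : ℝ≥0∞} (hr : 0 < r)
    (hr' : r ≠ ∞) :
    volume (F + segment ℝ 0 ξ) ≤ μH[(Fintype.card ι : ℝ) - 1] F * (r + ‖ξ‖ₑ) := by
  rw [← ENNReal.div_le_iff (hr.trans_le le_self_add).ne'
    (ENNReal.add_ne_top.2 ⟨hr', enorm_ne_top⟩), Measure.hausdorffMeasure_apply]
  refine le_iSup₂_of_le r hr (le_iInf₂ fun t hFt => le_iInf fun ht => ?_)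
  refine ENNReal.div_le_of_le_mul ?_
  calc volume (F + segment ℝ 0 ξ) ≤ volume (⋃ k, t k + segment ℝ 0 ξ) :=
        measure_mono ((add_subset_add_right hFt).trans (iUnion_add _ _).subset)
    _ ≤ ∑' k, volume (t k + segment ℝ 0 ξ) := measure_iUnion_le _
    _ ≤ ∑' k, (⨆ _ : (t k).Nonempty, ediam (t k) ^ ((Fintype.card ι : ℝ) - 1)) *
          (r + ‖ξ‖ₑ) := ENNReal.tsum_le_tsum fun k => ?_
    _ = _ := ENNReal.tsum_mul_right
  rcases (t k).eq_empty_or_nonempty with htk | htk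
  · simp [htk]
  rw [iSup_pos htk]
  have hbdd : Bornology.IsBounded (t k) :=
    isBounded_iff_ediam_ne_top.2 (ne_top_of_le_ne_top hr' (ht k))
  exact (volume_add_segment_le hbdd ξ).trans (by gcongr; exact ht k)

theorem volume_add_segment_le_enorm_mul_hausdorffMeasure
    (F : Set (EuclideanSpace ℝ ι)) {ξ : EuclideanSpace ℝ ι} (hξ : ξ ≠ 0) :
    volume (F + segment ℝ 0 ξ) ≤ ‖ξ‖ₑ * μH[(Fintype.card ι : ℝ) - 1] F := by
  have : Nonempty ι := not_isEmpty_iff.1 fun _ => hξ (Subsingleton.elim _ _)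
  have hlim : Tendsto (fun r => μH[(Fintype.card ι : ℝ) - 1] F * (r + ‖ξ‖ₑ)) (𝓝[>] 0)
      (𝓝 (μH[(Fintype.card ι : ℝ) - 1] F * ‖ξ‖ₑ)) := by
    have hshift : Tendsto (fun r => r + ‖ξ‖ₑ) (𝓝[>] 0) (𝓝 (0 + ‖ξ‖ₑ)) :=
      (tendsto_nhdsWithin_of_tendsto_nhds tendsto_id).add_const _
    simpa using ENNReal.Tendsto.const_mul hshift (.inl (by simpa using hξ))
  rw [mul_comm]
  refine ge_of_tendsto hlim ?_
  filter_upwards [self_mem_nhdsWithin, Ioo_mem_nhdsGT one_pos] with r hr hr1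
  exact volume_add_segment_le_hausdorffMeasure_mul F ξ hr hr1.2.ne_top

end EuclideanSpace

theorem stmt_3_general (n : ℕ) (A : Set (EuclideanSpace ℝ (Fin n)))
    (ξ : EuclideanSpace ℝ (Fin n)) :
    volume (symmDiff A ((fun x => x + ξ) '' A)) ≤
      (‖ξ‖₊ : ENNReal) * μH[(n : ℝ) - 1] (frontier A) := by
  rcases eq_or_ne ξ 0 with rfl | hξ
  · simp
  rw [← enorm_eq_nnnorm]
  calc volume (symmDiff A ((fun x => x + ξ) '' A)) ≤ volume (frontier A + segment ℝ 0 ξ) :=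
        measure_mono (symmDiff_image_add_subset_frontier_add_segment A ξ)
    _ ≤ _ := by
        simpa using EuclideanSpace.volume_add_segment_le_enorm_mul_hausdorffMeasure (frontier A) hξ

/-- For a bounded measurable set `A ⊆ ℝⁿ` and any `ξ ∈ ℝⁿ`, the Lebesgue measure of
the symmetric difference `A Δ (A + ξ)` is at most `|ξ|` times the `(n-1)`-dimensional
Hausdorff measure of the boundary of `A`. -/
theorem stmt_3 (n : ℕ) (A : Set (EuclideanSpace ℝ (Fin n)))
    (hA : MeasurableSet A) (hAbdd : Bornology.IsBounded A)
    (ξ : EuclideanSpace ℝ (Fin n)) :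
    volume (symmDiff A ((fun x => x + ξ) '' A)) ≤
      (‖ξ‖₊ : ENNReal) * μH[(n : ℝ) - 1] (frontier A) :=
  stmt_3_general n A ξ
end

section
/- For the Euclidean ball B(0,r) ⊆ ℝ^n of radius r and any ξ ∈ ℝ^n, the Lebesgue measure of B(0,r) Δ (ξ + B(0,r)) is at most |ξ| times the surface measure of the sphere of radius r, i.e. at most |ξ| · n · ω_n · r^{n−1}, where ω_n is the volume of the unit ball. -/
open MeasureTheory Metric Set

lemma aux_pow (n : ℕ) {a b : ℝ} (hb : 0 ≤ b) (hab : b ≤ a) :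
    a ^ n - b ^ n ≤ n * (a - b) * a ^ (n - 1) := by
  induction n with
  | zero => simp
  | succ m ih =>
    have ha : 0 ≤ a := hb.trans hab
    have h1 : a ^ (m + 1) - b ^ (m + 1) = a * (a ^ m - b ^ m) + (a - b) * b ^ m := by ring
    have h2 : a * (a ^ m - b ^ m) ≤ a * (m * (a - b) * a ^ (m - 1)) :=
      mul_le_mul_of_nonneg_left ih ha
    have h3 : (a - b) * b ^ m ≤ (a - b) * a ^ m :=
      mul_le_mul_of_nonneg_left (pow_le_pow_left₀ hb hab m) (by linarith)
    have h4 : a * (m * (a - b) * a ^ (m - 1)) ≤ m * (a - b) * a ^ m := by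
      cases m with
      | zero => simp
      | succ k =>
        apply le_of_eq
        rw [Nat.add_sub_cancel]
        ring
    have : a ^ (m + 1) - b ^ (m + 1) ≤ ((m : ℝ) + 1) * (a - b) * a ^ m := by
      rw [h1]; push_cast at h4 ⊢; nlinarith
    simpa [Nat.cast_succ] using this

/-- For the Euclidean ball `B(0,r) ⊆ ℝⁿ` and any `ξ`, the measure of
`B(0,r) Δ (ξ + B(0,r))` is at most `|ξ| · n · ω_n · r^{n-1}`, where `ω_n` is the
volume of the unit ball. -/
theorem stmt_4 (n : ℕ) (hn : 0 < n) (r : ℝ) (hr : 0 < r)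
    (ξ : EuclideanSpace ℝ (Fin n)) :
    volume (symmDiff (ball (0 : EuclideanSpace ℝ (Fin n)) r)
        ((fun x => ξ + x) '' ball (0 : EuclideanSpace ℝ (Fin n)) r)) ≤
      ENNReal.ofReal (‖ξ‖ * n *
        (volume (ball (0 : EuclideanSpace ℝ (Fin n)) 1)).toReal * r ^ (n - 1)) := by
  haveI : Nontrivial (EuclideanSpace ℝ (Fin n)) :=
    Module.nontrivial_of_finrank_pos (R := ℝ)
      (by rw [finrank_euclideanSpace_fin]; exact hn)
  set ω : ENNReal := volume (ball (0 : EuclideanSpace ℝ (Fin n)) 1) with hωdef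
  have hωfin : ω ≠ ⊤ := (measure_ball_lt_top).ne
  set t := ‖ξ‖ with htdef
  have ht0 : (0:ℝ) ≤ t := norm_nonneg _
  set s : ℝ := max (r - t / 2) 0 with hsdef
  have hs0 : (0:ℝ) ≤ s := le_max_right _ _
  have hsr : s ≤ r := max_le (by linarith) hr.le
  -- the image is a ball
  have himg : (fun x => ξ + x) '' ball (0 : EuclideanSpace ℝ (Fin n)) r = ball ξ r := by
    ext x
    simp only [mem_image, mem_ball, dist_eq_norm, sub_zero]
    constructor
    · rintro ⟨y, hy, rfl⟩; simpa [add_sub_cancel_left] using hy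
    · intro hx; exact ⟨x - ξ, by simpa using hx, by abel⟩
  rw [himg]
  set c : EuclideanSpace ℝ (Fin n) := (2⁻¹ : ℝ) • ξ with hcdef
  have hc0 : dist c 0 = t / 2 := by
    simp [hcdef, dist_eq_norm, norm_smul, htdef]
    ring
  have hcξ : dist c ξ = t / 2 := by
    have : c - ξ = (-(2⁻¹) : ℝ) • ξ := by
      rw [hcdef]; module
    rw [dist_eq_norm, this, norm_smul]
    simp [htdef]; ring
  -- the small ball is inside both balls
  have hsmall : ∀ x ∈ ball c s, x ∈ ball (0 : EuclideanSpace ℝ (Fin n)) r ∩ ball ξ r := by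
    intro x hx
    rw [mem_ball] at hx
    have hspos : 0 < s := lt_of_le_of_lt dist_nonneg hx
    have hrt : 0 < r - t / 2 := by
      by_contra h
      push_neg at h
      have : s = 0 := by rw [hsdef]; exact max_eq_right h
      linarith
    have hse : s = r - t / 2 := by rw [hsdef]; exact max_eq_left hrt.le
    constructor
    · rw [mem_ball]
      calc dist x 0 ≤ dist x c + dist c 0 := dist_triangle _ _ _
        _ < s + t / 2 := by rw [hc0]; linarith
        _ ≤ r := by rw [hse]; linarith
    · rw [mem_ball]
      calc dist x ξ ≤ dist x c + dist c ξ := dist_triangle _ _ _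
        _ < s + t / 2 := by rw [hcξ]; linarith
        _ ≤ r := by rw [hse]; linarith
  have hS1 : ball c s ⊆ ball (0 : EuclideanSpace ℝ (Fin n)) r := fun x hx => (hsmall x hx).1
  have hS2 : ball c s ⊆ ball ξ r := fun x hx => (hsmall x hx).2
  -- symmDiff inclusion
  have hsub : symmDiff (ball (0 : EuclideanSpace ℝ (Fin n)) r) (ball ξ r) ⊆
      (ball (0 : EuclideanSpace ℝ (Fin n)) r \ ball c s) ∪ (ball ξ r \ ball c s) := by
    intro x hx
    rw [Set.mem_symmDiff] at hx
    rcases hx with ⟨h1, h2⟩ | ⟨h1, h2⟩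
    · exact Or.inl ⟨h1, fun hc => h2 (hS2 hc)⟩
    · exact Or.inr ⟨h1, fun hc => h2 (hS1 hc)⟩
  -- volumes
  have hvol : ∀ x : EuclideanSpace ℝ (Fin n), volume (ball x r) = ENNReal.ofReal (r ^ n) * ω := by
    intro x
    rw [Measure.addHaar_ball volume x hr.le, finrank_euclideanSpace_fin]
  have hvolS : volume (ball c s) = ENNReal.ofReal (s ^ n) * ω := by
    rw [Measure.addHaar_ball volume c hs0, finrank_euclideanSpace_fin]
  have hSfin : volume (ball c s) ≠ ⊤ := measure_ball_lt_top.ne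
  have hdiff : ∀ x : EuclideanSpace ℝ (Fin n), ball c s ⊆ ball x r →
      volume (ball x r \ ball c s) = ENNReal.ofReal (r ^ n) * ω - ENNReal.ofReal (s ^ n) * ω := by
    intro x hsub'
    rw [measure_diff hsub' measurableSet_ball.nullMeasurableSet hSfin, hvol, hvolS]
  calc volume (symmDiff (ball (0 : EuclideanSpace ℝ (Fin n)) r) (ball ξ r))
      ≤ volume ((ball (0 : EuclideanSpace ℝ (Fin n)) r \ ball c s) ∪ (ball ξ r \ ball c s)) := measure_mono hsub
    _ ≤ volume (ball (0 : EuclideanSpace ℝ (Fin n)) r \ ball c s) + volume (ball ξ r \ ball c s) := measure_union_le _ _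
    _ = 2 * (ENNReal.ofReal (r ^ n) * ω - ENNReal.ofReal (s ^ n) * ω) := by
        rw [hdiff 0 hS1, hdiff ξ hS2, two_mul]
    _ ≤ ENNReal.ofReal (t * n * ω.toReal * r ^ (n - 1)) := by
        have hsub' : ENNReal.ofReal (r ^ n) * ω - ENNReal.ofReal (s ^ n) * ω
            = ENNReal.ofReal (r ^ n - s ^ n) * ω := by
          rw [ENNReal.ofReal_sub _ (pow_nonneg hs0 n), ENNReal.sub_mul (fun _ _ => hωfin)]
        rw [hsub', ← ENNReal.ofReal_ofNat, ← mul_assoc, ← ENNReal.ofReal_mul (by norm_num)]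
        have hkey : 2 * (r ^ n - s ^ n) ≤ t * n * r ^ (n - 1) := by
          have h1 : r ^ n - s ^ n ≤ n * (r - s) * r ^ (n - 1) := aux_pow n hs0 hsr
          have h2 : r - s ≤ t / 2 := by
            rw [hsdef]
            rcases le_total (r - t / 2) 0 with h | h
            · rw [max_eq_right h]; linarith
            · rw [max_eq_left h]; linarith
          have h3 : (0:ℝ) ≤ (n:ℝ) * r ^ (n - 1) := by positivity
          nlinarith [pow_nonneg hr.le (n-1)]
        calc ENNReal.ofReal (2 * (r ^ n - s ^ n)) * ω
            ≤ ENNReal.ofReal (t * n * r ^ (n - 1)) * ω := by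
              exact mul_le_mul_left (ENNReal.ofReal_le_ofReal hkey) ω
          _ = ENNReal.ofReal (t * n * ω.toReal * r ^ (n - 1)) := by
              conv_lhs => rw [← ENNReal.ofReal_toReal hωfin]
              rw [← ENNReal.ofReal_mul (by positivity)]
              ring_nf
end

section
/- For x > 0, the Gamma function satisfies Stirling's bound Γ(x) ≤ √(2π) · x^{x − 1/2} · e^{−x} · e^{1/(12x)}. -/
/-!
Let `μ x = log Γ(x) - ((x - 1/2) log x - x + log (2π) / 2)`. The functional equation of `Γ` gives
`μ x - μ (x + 1) = (x + 1/2) log (1 + 1/x) - 1`, and expanding `log ((1 + t) / (1 - t))` at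
`t = 1 / (2x + 1)` bounds this by `1/(12x) - 1/(12(x + 1))`. Hence `μ x - 1/(12x) ≤ μ (x + n)` for
every `n`. Log-convexity of `Γ` bounds `μ (n + x)` by `μ n + o(1)`, and `μ n → 0` is Stirling's
formula for `n!`.
-/

open Real Filter Topology

namespace Real

theorem add_half_mul_log_one_add_inv_sub_one_le {a : ℝ} (ha : 0 < a) :
    (a + 1 / 2) * log (1 + a⁻¹) - 1 ≤ 1 / (12 * a) - 1 / (12 * (a + 1)) := by
  set r := (1 / (2 * a + 1)) ^ 2 with hr
  have hr1 : r < 1 := by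
    rw [hr, div_pow, one_pow, div_lt_one (by positivity)]; nlinarith
  have hseries : HasSum (fun k : ℕ => r ^ k / (2 * k + 1)) ((a + 1 / 2) * log (1 + a⁻¹)) :=
    ((hasSum_log_one_add_inv ha).mul_left (a + 1 / 2)).congr_fun fun k => by
      rw [hr, ← pow_mul, pow_succ]
      field_simp
  have htail := (hasSum_nat_add_iff' 1).2 hseries
  rw [Finset.sum_range_one, pow_zero, Nat.cast_zero, mul_zero, zero_add, div_one] at htail
  have hgeom : HasSum (fun k : ℕ => r ^ (k + 1) / 3) (r / (1 - r) / 3) :=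
    (((hasSum_geometric_of_lt_one (by positivity) hr1).mul_left r).div_const 3).congr_fun
      fun k => by ring
  have hsum : r / (1 - r) / 3 = 1 / (12 * a) - 1 / (12 * (a + 1)) := by
    have h1r : 1 - r = 4 * a * (a + 1) / (2 * a + 1) ^ 2 := by rw [hr]; field_simp; ring
    rw [h1r, hr]; field_simp; ring
  refine hsum ▸ hasSum_le (fun k => ?_) htail hgeom
  gcongr
  push_cast
  linarith [k.cast_nonneg (α := ℝ)]

theorem log_Gamma_add_one {x : ℝ} (hx : 0 < x) :
    log (Gamma (x + 1)) = log x + log (Gamma x) := by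
  rw [Gamma_add_one hx.ne', log_mul hx.ne' (Gamma_pos_of_pos hx).ne']

theorem log_Gamma_add_le {y x : ℝ} (hy : 0 < y) (hx : 0 < x) :
    log (Gamma (y + x)) ≤ log (Gamma y) + x * log (y + x) := by
  have hslope := convexOn_log_Gamma.slope_mono_adjacent (x := y) (y := y + x) (z := y + x + 1)
    hy (Set.mem_Ioi.2 (by positivity)) (by linarith) (by linarith)
  have hstep : log (Gamma (y + x + 1)) - log (Gamma (y + x)) = log (y + x) := by
    rw [log_Gamma_add_one (by positivity)]
    ring
  simp only [Function.comp_apply, hstep, add_sub_cancel_left, div_one] at hslope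
  rw [div_le_iff₀ hx] at hslope
  linarith

noncomputable def stirlingRemainder (x : ℝ) : ℝ :=
  log (Gamma x) - ((x - 1 / 2) * log x - x + log (2 * π) / 2)

theorem stirlingRemainder_sub_stirlingRemainder_add_one {x : ℝ} (hx : 0 < x) :
    stirlingRemainder x - stirlingRemainder (x + 1) = (x + 1 / 2) * log (1 + x⁻¹) - 1 := by
  have hlog : log (1 + x⁻¹) = log (x + 1) - log x := by
    rw [← log_div (by positivity) hx.ne']
    congr 1
    field_simp
  rw [stirlingRemainder, stirlingRemainder, log_Gamma_add_one hx, hlog]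
  ring

theorem stirlingRemainder_sub_le_add_nat {x : ℝ} (hx : 0 < x) (n : ℕ) :
    stirlingRemainder x - 1 / (12 * x) ≤ stirlingRemainder (x + n) - 1 / (12 * (x + n)) := by
  induction n with
  | zero => simp
  | succ n ih =>
    have hstep := stirlingRemainder_sub_stirlingRemainder_add_one (x := x + n) (by positivity)
    have hbound := add_half_mul_log_one_add_inv_sub_one_le (a := x + n) (by positivity)
    push_cast
    rw [← add_assoc]
    linarith

theorem stirlingRemainder_natCast {n : ℕ} (hn : n ≠ 0) :
    stirlingRemainder n = log (Stirling.stirlingSeq n) - log √π := by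
  have hn' : (0 : ℝ) < n := by positivity
  have hfact : log n.factorial = log n + log (Gamma n) := by
    rw [← Gamma_nat_eq_factorial, log_Gamma_add_one hn']
  rw [stirlingRemainder, Stirling.log_stirlingSeq_formula, hfact, log_sqrt pi_pos.le,
    log_mul two_ne_zero pi_ne_zero, log_mul two_ne_zero hn'.ne', log_div hn'.ne' (exp_pos 1).ne',
    log_exp]
  ring

theorem tendsto_stirlingRemainder_natCast :
    Tendsto (fun n : ℕ => stirlingRemainder n) atTop (𝓝 0) := by
  have hlog := ((continuousAt_log (by positivity)).tendsto.comp
    Stirling.tendsto_stirlingSeq_sqrt_pi).sub_const (log √π)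
  rw [sub_self] at hlog
  refine hlog.congr' ?_
  filter_upwards [eventually_ne_atTop 0] with n hn
  exact (stirlingRemainder_natCast hn).symm

theorem stirlingRemainder_add_le {y x : ℝ} (hy : 0 < y) (hx : 0 < x) :
    stirlingRemainder (y + x) ≤ stirlingRemainder y + (x - (y - 1 / 2) * log (1 + x / y)) := by
  have hlog : log (1 + x / y) = log (y + x) - log y := by
    rw [← log_div (by positivity) hy.ne']
    congr 1
    field_simp
  have := log_Gamma_add_le hy hx
  rw [stirlingRemainder, stirlingRemainder, hlog]
  linarith

theorem tendsto_sub_mul_log_one_add_div (x : ℝ) :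
    Tendsto (fun y : ℝ => x - (y - 1 / 2) * log (1 + x / y)) atTop (𝓝 0) := by
  have hone : Tendsto (fun y : ℝ => 1 + x / y) atTop (𝓝 1) := by
    simpa using tendsto_const_nhds.add (tendsto_const_nhds.div_atTop (tendsto_id (α := ℝ)))
  have hlog : Tendsto (fun y : ℝ => log (1 + x / y)) atTop (𝓝 (log 1)) :=
    (continuousAt_log one_ne_zero).tendsto.comp hone
  rw [log_one] at hlog
  have hsplit : Tendsto (fun y : ℝ => x - (y * log (1 + x / y) - 1 / 2 * log (1 + x / y))) atTop
      (𝓝 (x - (x - 1 / 2 * 0))) :=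
    tendsto_const_nhds.sub ((tendsto_mul_log_one_add_div_atTop x).sub (hlog.const_mul _))
  rw [mul_zero, sub_zero, sub_self] at hsplit
  exact hsplit.congr fun y => by ring

theorem stirlingRemainder_le {x : ℝ} (hx : 0 < x) : stirlingRemainder x ≤ 1 / (12 * x) := by
  have hbound : ∀ᶠ n : ℕ in atTop, stirlingRemainder x - 1 / (12 * x) ≤
      stirlingRemainder n + (x - (n - 1 / 2) * log (1 + x / n)) := by
    filter_upwards [eventually_ne_atTop 0] with n hn
    have hn : (0 : ℝ) < n := by positivity
    calc stirlingRemainder x - 1 / (12 * x)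
        ≤ stirlingRemainder (x + n) - 1 / (12 * (x + n)) := stirlingRemainder_sub_le_add_nat hx n
      _ ≤ stirlingRemainder (n + x) := by
        rw [add_comm x]
        linarith [show 0 < 1 / (12 * (n + x)) by positivity]
      _ ≤ _ := stirlingRemainder_add_le hn hx
  have hlim : Tendsto (fun n : ℕ => stirlingRemainder n + (x - (n - 1 / 2) * log (1 + x / n)))
      atTop (𝓝 (0 + 0)) :=
    tendsto_stirlingRemainder_natCast.add
      ((tendsto_sub_mul_log_one_add_div x).comp tendsto_natCast_atTop_atTop)
  rw [add_zero] at hlim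
  linarith [ge_of_tendsto hlim hbound]

end Real

/-- Stirling's upper bound for the Gamma function:
`Γ(x) ≤ √(2π) · x^{x−1/2} · e^{−x} · e^{1/(12x)}` for `x > 0`. -/
theorem stmt_8 (x : ℝ) (hx : 0 < x) :
    Real.Gamma x ≤ Real.sqrt (2 * Real.pi) * x ^ (x - 1 / 2) *
      Real.exp (-x) * Real.exp (1 / (12 * x)) := by
  have hμ := stirlingRemainder_le hx
  rw [stirlingRemainder] at hμ
  calc Gamma x = exp (log (Gamma x)) := (exp_log (Gamma_pos_of_pos hx)).symm
    _ ≤ exp (log √(2 * π) + (x - 1 / 2) * log x + -x + 1 / (12 * x)) := by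
      rw [exp_le_exp, log_sqrt (by positivity)]
      linarith
    _ = √(2 * π) * x ^ (x - 1 / 2) * exp (-x) * exp (1 / (12 * x)) := by
      rw [exp_add, exp_add, exp_add, exp_log (by positivity), rpow_def_of_pos hx, mul_comm (log x)]
end
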